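/- arXiv:1806.01918 — 2 statements merged into one kernel-verified Lean document; each statement's English description precedes it below -/
import Mathlib

section
/- In the multilayer setting with widths n_0, …, n_L and layers h = (h_1, …, h_L), for every i ∈ {1, …, L-1} and every (s*_1, …, s*_i) ∈ 𝒮^{(i)}_h, the number of s_{i+1} ∈ {0,1}^{n_{i+1}} with (s*_1, …, s*_i, s_{i+1}) ∈ 𝒮^{(i+1)}_h is at most Σ_{j=0}^{min(n_0, |s*_1|, …, |s*_i|)} C(n_{i+1}, j). -/
open Matrix

noncomputable def relu {n n' : ℕ} (W : Matrix (Fin n') (Fin n) ℝ) (b : Fin n' → ℝ)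
    (x : Fin n → ℝ) : Fin n' → ℝ :=
  fun i => max 0 (W i ⬝ᵥ x + b i)

noncomputable def sig {n n' : ℕ} (W : Matrix (Fin n') (Fin n) ℝ) (b : Fin n' → ℝ)
    (x : Fin n → ℝ) : Fin n' → Bool :=
  fun i => decide (0 < W i ⬝ᵥ x + b i)

/-- Forward pass through the first `l` layers: `fwd n W b l = h_l ∘ ⋯ ∘ h_1`. -/
noncomputable def fwd (n : ℕ → ℕ) (W : ∀ l : ℕ, Matrix (Fin (n (l + 1))) (Fin (n l)) ℝ)
    (b : ∀ l : ℕ, Fin (n (l + 1)) → ℝ) : (l : ℕ) → (Fin (n 0) → ℝ) → (Fin (n l) → ℝ)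
  | 0 => fun x => x
  | l + 1 => fun x => relu (W l) (b l) (fwd n W b l x)

/-- Multi signature of length `m`:
`msig n W b m x = (S_{h_1}(x), S_{h_2}(h_1(x)), …, S_{h_m}(h_{m-1}∘⋯∘h_1(x)))`. -/
noncomputable def msig (n : ℕ → ℕ) (W : ∀ l : ℕ, Matrix (Fin (n (l + 1))) (Fin (n l)) ℝ)
    (b : ∀ l : ℕ, Fin (n (l + 1)) → ℝ) (m : ℕ) (x : Fin (n 0) → ℝ) :
    ∀ l : Fin m, Fin (n (l.val + 1)) → Bool :=
  fun l => sig (W l.val) (b l.val) (fwd n W b l.val x)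

/-- Number of active units of a binary vector `s`, i.e. `|s|`. -/
def cnt {k : ℕ} (s : Fin k → Bool) : ℕ := (Finset.univ.filter fun j => s j = true).card

/-- `min(n_0, |s_1|, …, |s_i|)` for a length-`i` multi signature `s`. -/
def minAct (n : ℕ → ℕ) (i : ℕ) (s : ∀ l : Fin i, Fin (n (l.val + 1)) → Bool) : ℕ :=
  Finset.univ.fold min (n 0) (fun l : Fin i => cnt (s l))

/-! On the inputs with multi signature `s*`, layer `l ≤ i` acts as the affine map
`x ↦ D_l (W_l x + b_l)`, where `D_l` is the 0/1 diagonal matrix of the units active in `s*_l`.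
Hence these inputs are mapped by the first `i` layers into an affine subspace of dimension at most
`min(n_0, |s*_1|, …, |s*_i|)`, and the possible `s_{i+1}` are sign patterns of `n_{i+1}` affine
functionals on that subspace.

`m` affine functionals on a space of dimension `d` have at most `∑_{j ≤ d} C(m, j)` sign patterns:
forgetting the last functional identifies exactly the pairs of patterns differing in the last bit
only, and each such pair yields, by interpolating along a segment, a pattern of the remaining
functionals on the zero set of the last one, a space of dimension `d - 1` (there are no such
pairs when the last functional is constant). -/

open Set Module AffineMap

theorem sum_range_choose_succ_succ (m e : ℕ) :
    ∑ j ∈ Finset.range (e + 2), (m + 1).choose j =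
      ∑ j ∈ Finset.range (e + 2), m.choose j + ∑ j ∈ Finset.range (e + 1), m.choose j := by
  rw [Finset.sum_range_succ' _ (e + 1), Finset.sum_range_succ' (fun j => m.choose j) (e + 1)]
  simp only [Nat.choose_succ_succ, Finset.sum_add_distrib, Nat.choose_zero_right]
  ring

def splitPatterns {m : ℕ} (S : Set (Fin (m + 1) → Bool)) : Set (Fin m → Bool) :=
  {t | Fin.snoc t true ∈ S ∧ Fin.snoc t false ∈ S}

theorem ncard_eq_ncard_image_init_add_ncard_splitPatterns {m : ℕ} (S : Set (Fin (m + 1) → Bool)) :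
    S.ncard = (Fin.init '' S).ncard + (splitPatterns S).ncard := by
  set A : Bool → Set (Fin m → Bool) := fun c => {t | Fin.snoc t c ∈ S}
  set snoc : Bool → (Fin m → Bool) → Fin (m + 1) → Bool := fun c t => Fin.snoc t c
  have hlast (t : Fin (m + 1) → Bool) : snoc (t (Fin.last m)) (Fin.init t) = t :=
    Fin.snoc_init_self t
  have hS : S = snoc true '' A true ∪ snoc false '' A false := by
    ext t
    constructor
    · intro ht
      cases h : t (Fin.last m)
      · refine Or.inr ⟨Fin.init t, ?_, h ▸ hlast t⟩
        show snoc false (Fin.init t) ∈ S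
        rwa [← h, hlast]
      · refine Or.inl ⟨Fin.init t, ?_, h ▸ hlast t⟩
        show snoc true (Fin.init t) ∈ S
        rwa [← h, hlast]
    · rintro (⟨t, ht, rfl⟩ | ⟨t, ht, rfl⟩) <;> assumption
  have hinit : Fin.init '' S = A true ∪ A false := by
    ext t
    constructor
    · rintro ⟨u, hu, rfl⟩
      rw [← hlast u] at hu
      cases h : u (Fin.last m) <;> rw [h] at hu
      · exact Or.inr hu
      · exact Or.inl hu
    · rintro (ht | ht) <;> exact ⟨_, ht, Fin.init_snoc _ _⟩
  have hdisj : Disjoint (snoc true '' A true) (snoc false '' A false) := by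
    rw [disjoint_left]
    rintro _ ⟨t, -, rfl⟩ ⟨u, -, h⟩
    simpa [snoc] using congrFun h (Fin.last m)
  have hsnoc (c : Bool) : Function.Injective (snoc c) :=
    fun t u h => (Fin.snoc_injective2 h).1
  have hsplit : splitPatterns S = A true ∩ A false := rfl
  rw [hinit, hsplit, ncard_union_add_ncard_inter (A true) (A false), hS, ncard_union_eq hdisj,
    ncard_image_of_injective _ (hsnoc true), ncard_image_of_injective _ (hsnoc false)]

section AffineSpace

variable {V P : Type*} [AddCommGroup V] [Module ℝ V] [AddTorsor V P]

noncomputable def signPattern {ι : Type*} (f : ι → P →ᵃ[ℝ] ℝ) (p : P) : ι → Bool :=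
  fun j => decide (0 < f j p)

theorem signPattern_lineMap {ι : Type*} {f : ι → P →ᵃ[ℝ] ℝ} {p q : P}
    (h : signPattern f p = signPattern f q) {θ : ℝ} (hθ : θ ∈ Icc (0 : ℝ) 1) :
    signPattern f (lineMap p q θ) = signPattern f p := by
  funext j
  have hj := congrFun h j
  simp only [signPattern, apply_lineMap, decide_eq_decide] at hj ⊢
  by_cases hp : 0 < f j p
  · exact iff_of_true ((convex_Ioi (0 : ℝ)).lineMap_mem hp (hj.1 hp) hθ) hp
  · refine iff_of_false (not_lt.2 ?_) hp
    exact (convex_Iic (0 : ℝ)).lineMap_mem (not_lt.1 hp) (not_lt.1 (hp ∘ hj.2)) hθ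

theorem init_image_range_signPattern {m : ℕ} (f : Fin (m + 1) → P →ᵃ[ℝ] ℝ) :
    Fin.init '' range (signPattern f) = range (signPattern (Fin.init f)) := by
  rw [← range_comp]
  rfl

theorem exists_signPattern_init_eq_of_mem_splitPatterns {m : ℕ} {f : Fin (m + 1) → P →ᵃ[ℝ] ℝ}
    {t : Fin m → Bool} (ht : t ∈ splitPatterns (range (signPattern f))) :
    ∃ z, f (Fin.last m) z = 0 ∧ signPattern (Fin.init f) z = t := by
  obtain ⟨⟨p, hp⟩, ⟨q, hq⟩⟩ := ht
  have hp' : signPattern (Fin.init f) p = t := (congrArg Fin.init hp).trans (Fin.init_snoc _ _)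
  have hq' : signPattern (Fin.init f) q = t := (congrArg Fin.init hq).trans (Fin.init_snoc _ _)
  have hp0 : 0 < f (Fin.last m) p := by simpa [signPattern] using congrFun hp (Fin.last m)
  have hq0 : f (Fin.last m) q ≤ 0 := by simpa [signPattern] using congrFun hq (Fin.last m)
  set a := f (Fin.last m) q
  set b := f (Fin.last m) p
  refine ⟨lineMap q p (a / (a - b)), ?_, ?_⟩
  · rw [apply_lineMap, lineMap_apply_ring']
    field_simp [(by linarith : a - b ≠ 0)]
    ring
  · have hθ : a / (a - b) ∈ Icc (0 : ℝ) 1 :=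
      ⟨div_nonneg_of_nonpos hq0 (by linarith), (div_le_one_of_neg (by linarith)).2 (by linarith)⟩
    rw [signPattern_lineMap (hq'.trans hp'.symm) hθ, hq']

theorem splitPatterns_range_signPattern_eq_empty {m : ℕ} {f : Fin (m + 1) → P →ᵃ[ℝ] ℝ}
    (h : (f (Fin.last m)).linear = 0) : splitPatterns (range (signPattern f)) = ∅ := by
  refine eq_empty_of_forall_notMem fun t ht => ?_
  obtain ⟨z, hz, -⟩ := exists_signPattern_init_eq_of_mem_splitPatterns ht
  obtain ⟨⟨p, hp⟩, -⟩ := ht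
  have hp0 : 0 < f (Fin.last m) p := by simpa [signPattern] using congrFun hp (Fin.last m)
  have hconst : f (Fin.last m) p = f (Fin.last m) z := by
    rw [← sub_eq_zero, ← vsub_eq_sub, ← linearMap_vsub, h, LinearMap.zero_apply]
  linarith

theorem AffineMap.exists_affineSubspace_direction_ker (a : P →ᵃ[ℝ] ℝ) (ha : a.linear ≠ 0) :
    ∃ Z : AffineSubspace ℝ P,
      Nonempty Z ∧ Z.direction = LinearMap.ker a.linear ∧ {z | a z = 0} ⊆ Z := by
  obtain ⟨p₀, hp₀⟩ := a.linear_surjective_iff.1 (LinearMap.surjective ha) 0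
  refine ⟨.mk' p₀ (LinearMap.ker a.linear), ⟨p₀, AffineSubspace.self_mem_mk' _ _⟩,
    AffineSubspace.direction_mk' _ _, fun z hz => ?_⟩
  rw [SetLike.mem_coe, AffineSubspace.mem_mk', LinearMap.mem_ker, linearMap_vsub, hz, hp₀,
    vsub_self]

theorem ncard_range_signPattern_le [FiniteDimensional ℝ V] {m d : ℕ} (f : Fin m → P →ᵃ[ℝ] ℝ)
    (hd : finrank ℝ V ≤ d) :
    (range (signPattern f)).ncard ≤ ∑ j ∈ Finset.range (d + 1), m.choose j := by
  induction m generalizing d V P with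
  | zero =>
    calc _ ≤ 1 := ncard_le_one_of_subsingleton _
      _ = _ := by simp [Finset.sum_range_succ']
  | succ m ih =>
    rw [ncard_eq_ncard_image_init_add_ncard_splitPatterns, init_image_range_signPattern]
    by_cases ha : (f (Fin.last m)).linear = 0
    · rw [splitPatterns_range_signPattern_eq_empty ha, ncard_empty, add_zero]
      exact (ih _ hd).trans (Finset.sum_le_sum fun j _ => Nat.choose_le_choose j m.le_succ)
    have hK := Module.Dual.finrank_ker_add_one_of_ne_zero ha
    obtain ⟨e, rfl⟩ : ∃ e, d = e + 1 := Nat.exists_eq_add_one.2 (by omega)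
    obtain ⟨Z, _, hZ, hzeros⟩ := (f (Fin.last m)).exists_affineSubspace_direction_ker ha
    have hsplit : splitPatterns (range (signPattern f)) ⊆
        range (signPattern fun j => (Fin.init f j).comp Z.subtype) := by
      rintro t ht
      obtain ⟨z, hz, rfl⟩ := exists_signPattern_init_eq_of_mem_splitPatterns ht
      exact ⟨⟨z, hzeros hz⟩, rfl⟩
    have hZd : finrank ℝ Z.direction ≤ e := by rw [hZ]; omega
    rw [sum_range_choose_succ_succ]
    exact add_le_add (ih _ hd) ((ncard_le_ncard hsplit (toFinite _)).trans (ih _ hZd))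

theorem ncard_signPattern_image_le [FiniteDimensional ℝ V] {m d : ℕ} (f : Fin m → P →ᵃ[ℝ] ℝ)
    {S : Set P} (hS : finrank ℝ (vectorSpan ℝ S) ≤ d) :
    (signPattern f '' S).ncard ≤ ∑ j ∈ Finset.range (d + 1), m.choose j := by
  rcases S.eq_empty_or_nonempty with rfl | hne
  · simp
  have : Nonempty (affineSpan ℝ S) := (hne.mono (subset_affineSpan ℝ S)).to_subtype
  have hsub : signPattern f '' S ⊆
      range (signPattern fun j => (f j).comp (affineSpan ℝ S).subtype) := by
    rintro _ ⟨p, hp, rfl⟩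
    exact ⟨⟨p, subset_affineSpan ℝ S hp⟩, rfl⟩
  refine (ncard_le_ncard hsub (toFinite _)).trans (ncard_range_signPattern_le _ ?_)
  rwa [direction_affineSpan]

theorem finrank_vectorSpan_image_le {V₂ P₂ : Type*} [AddCommGroup V₂] [Module ℝ V₂]
    [AddTorsor V₂ P₂] [FiniteDimensional ℝ V] (f : P →ᵃ[ℝ] P₂) (S : Set P) :
    finrank ℝ (vectorSpan ℝ (f '' S)) ≤ finrank ℝ (vectorSpan ℝ S) := by
  rw [← f.map_vectorSpan]
  exact Submodule.finrank_map_le _ _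

end AffineSpace

section Layer

variable {n n' : ℕ} (W : Matrix (Fin n') (Fin n) ℝ) (b : Fin n' → ℝ)

noncomputable def preactivation : (Fin n → ℝ) →ᵃ[ℝ] (Fin n' → ℝ) :=
  W.mulVecLin.toAffineMap + AffineMap.const ℝ _ b

def activeMask (σ : Fin n' → Bool) : Fin n' → ℝ := fun j => if σ j then 1 else 0

noncomputable def maskedPreactivation (σ : Fin n' → Bool) : (Fin n → ℝ) →ᵃ[ℝ] (Fin n' → ℝ) :=
  (diagonal (activeMask σ)).mulVecLin.toAffineMap.comp (preactivation W b)

theorem relu_eq_maskedPreactivation_sig (x : Fin n → ℝ) :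
    relu W b x = maskedPreactivation W b (sig W b x) x := by
  funext j
  by_cases h : 0 < W j ⬝ᵥ x + b j
  · simp [relu, maskedPreactivation, preactivation, sig, activeMask, mulVec, h, le_of_lt h]
  · simp [relu, maskedPreactivation, preactivation, sig, activeMask, mulVec, h, not_lt.1 h]

theorem rank_diagonal_activeMask (σ : Fin n' → Bool) :
    (diagonal (activeMask σ)).rank = cnt σ := by
  classical
  rw [rank_diagonal, cnt, Fintype.card_subtype]
  congr 1
  ext j
  simp [activeMask]

theorem finrank_vectorSpan_maskedPreactivation_image_le (σ : Fin n' → Bool)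
    (S : Set (Fin n → ℝ)) :
    finrank ℝ (vectorSpan ℝ (maskedPreactivation W b σ '' S)) ≤ cnt σ := by
  rw [← AffineMap.map_vectorSpan, ← rank_diagonal_activeMask]
  exact Submodule.finrank_mono (LinearMap.map_le_range.trans (LinearMap.range_comp_le_range _ _))

end Layer

section Network

variable (n : ℕ → ℕ) (W : ∀ l : ℕ, Matrix (Fin (n (l + 1))) (Fin (n l)) ℝ)
  (b : ∀ l : ℕ, Fin (n (l + 1)) → ℝ) {i : ℕ} (s : ∀ l : Fin i, Fin (n (l.val + 1)) → Bool)

theorem image_fwd_succ_eq {k : ℕ} (hk : k < i) :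
    fwd n W b (k + 1) '' {x | msig n W b i x = s} =
      maskedPreactivation (W k) (b k) (s ⟨k, hk⟩) ''
        (fwd n W b k '' {x | msig n W b i x = s}) := by
  rw [image_image]
  refine image_congr fun x hx => ?_
  rw [← show msig n W b i x ⟨k, hk⟩ = s ⟨k, hk⟩ from congrFun hx _]
  exact relu_eq_maskedPreactivation_sig _ _ _

theorem finrank_vectorSpan_fwd_image_succ_le {k : ℕ} (hk : k < i) :
    finrank ℝ (vectorSpan ℝ (fwd n W b (k + 1) '' {x | msig n W b i x = s})) ≤
      min (finrank ℝ (vectorSpan ℝ (fwd n W b k '' {x | msig n W b i x = s})))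
        (cnt (s ⟨k, hk⟩)) := by
  rw [image_fwd_succ_eq n W b s hk]
  exact le_min (finrank_vectorSpan_image_le _ _)
    (finrank_vectorSpan_maskedPreactivation_image_le _ _ _ _)

theorem finrank_vectorSpan_fwd_image_le_minAct :
    finrank ℝ (vectorSpan ℝ (fwd n W b i '' {x | msig n W b i x = s})) ≤ minAct n i s := by
  have hanti (k : ℕ) (hk : k ≤ i) :
      finrank ℝ (vectorSpan ℝ (fwd n W b i '' {x | msig n W b i x = s})) ≤
        finrank ℝ (vectorSpan ℝ (fwd n W b k '' {x | msig n W b i x = s})) := by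
    refine Nat.decreasingInduction (fun k hk ih => ih.trans ?_) le_rfl hk
    exact (le_min_iff.1 (finrank_vectorSpan_fwd_image_succ_le n W b s hk)).1
  rw [minAct, Finset.le_fold_min]
  refine ⟨(hanti 0 i.zero_le).trans ((Submodule.finrank_le _).trans (finrank_fin_fun ℝ).le),
    fun l _ => (hanti (l + 1) l.isLt).trans ?_⟩
  exact (le_min_iff.1 (finrank_vectorSpan_fwd_image_succ_le n W b s l.isLt)).2

end Network

theorem stmt8_general (n : ℕ → ℕ)
    (W : ∀ l : ℕ, Matrix (Fin (n (l + 1))) (Fin (n l)) ℝ)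
    (b : ∀ l : ℕ, Fin (n (l + 1)) → ℝ)
    (i : ℕ)
    (s : ∀ l : Fin i, Fin (n (l.val + 1)) → Bool) :
    {t : Fin (n (i + 1)) → Bool | ∃ x : Fin (n 0) → ℝ,
        msig n W b i x = s ∧ sig (W i) (b i) (fwd n W b i x) = t}.ncard ≤
      ∑ j ∈ Finset.range (minAct n i s + 1), (n (i + 1)).choose j := by
  have hT : {t : Fin (n (i + 1)) → Bool | ∃ x : Fin (n 0) → ℝ,
        msig n W b i x = s ∧ sig (W i) (b i) (fwd n W b i x) = t} =
      signPattern (fun j => (AffineMap.proj j).comp (preactivation (W i) (b i))) ''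
        (fwd n W b i '' {x | msig n W b i x = s}) := by
    rw [image_image]
    rfl
  rw [hT]
  exact ncard_signPattern_image_le _ (finrank_vectorSpan_fwd_image_le_minAct n W b s)

/-- In the multilayer setting with widths `n 0, …, n L` and layers `h = (h_1, …, h_L)`,
for every `i ∈ {1, …, L-1}` and every attained length-`i` multi signature
`s* = (s*_1, …, s*_i) ∈ 𝒮^{(i)}_h`, the number of `s_{i+1} ∈ {0,1}^{n_{i+1}}` such that
`(s*_1, …, s*_i, s_{i+1}) ∈ 𝒮^{(i+1)}_h` is at most
`∑_{j=0}^{min(n_0, |s*_1|, …, |s*_i|)} C(n_{i+1}, j)`. -/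
theorem stmt8 (L : ℕ) (hL : 0 < L) (n : ℕ → ℕ) (hn : ∀ l, 0 < n l)
    (W : ∀ l : ℕ, Matrix (Fin (n (l + 1))) (Fin (n l)) ℝ)
    (b : ∀ l : ℕ, Fin (n (l + 1)) → ℝ)
    (i : ℕ) (hi1 : 1 ≤ i) (hi2 : i < L)
    (s : ∀ l : Fin i, Fin (n (l.val + 1)) → Bool)
    (hs : s ∈ Set.range (msig n W b i)) :
    {t : Fin (n (i + 1)) → Bool | ∃ x : Fin (n 0) → ℝ,
        msig n W b i x = s ∧ sig (W i) (b i) (fwd n W b i x) = t}.ncard ≤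
      ∑ j ∈ Finset.range (minAct n i s + 1), (n (i + 1)).choose j :=
  stmt8_general n W b i s
end

section
/- Let γ ∈ Γ be a collection satisfying the bound condition. In the multilayer setting with widths n_0, …, n_L and layers h = (h_1, …, h_L), the number of attained multi signatures satisfies |𝒮_h| ≤ ‖φ^{(γ)}_{n_L} ∘ ⋯ ∘ φ^{(γ)}_{n_1}(e_{n_0})‖₁, where ‖v‖₁ = Σ_{j=0}^∞ v_j. -/
open Matrix

/-- Tail sum `∑_{j ≥ J} v j` of a histogram. -/
noncomputable def tailSum (v : ℕ → ℕ) (J : ℕ) : ℕ :=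
  ∑' j : ℕ, if J ≤ j then v j else 0

/-- The partial order `≼` on histograms: `v ≼ w` iff all tail sums of `v` are dominated by
those of `w`. -/
def hle (v w : ℕ → ℕ) : Prop := ∀ J : ℕ, tailSum v J ≤ tailSum w J

/-- The histogram `e_i` with a single entry `1` at index `i`. -/
def histE (i : ℕ) : ℕ → ℕ := fun j => if j = i then 1 else 0

/-- The activation histogram `ℋ_{n'}(𝒮)`: entry `j` counts the signatures `s ∈ 𝒮` with
`|s| = j` active units. -/
noncomputable def actHist (n' : ℕ) (S : Set (Fin n' → Bool)) : ℕ → ℕ :=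
  fun j => {s ∈ S | cnt s = j}.ncard

/-- The clipping function `cl_k`: all mass at indices `≥ k` is moved to index `k`. -/
noncomputable def clip (k : ℕ) (v : ℕ → ℕ) : ℕ → ℕ :=
  fun i => if i < k then v i else if i = k then tailSum v k else 0

/-- The bound condition for a collection `γ` (accessed as `γ n' n` for `n ≤ n'`, `n' ≥ 1`):
every `γ n' n` is a histogram in `V` (finitely supported); for every ReLU layer function
`h ∈ RL(n, n')` with `0 ≤ n ≤ n'` the activation histogram of its attained signatures is
dominated by `γ n' n` (for `n = 0` the layer functions are the constants, with activation
histogram `e_0`); and `γ n' n ≼ γ n' m` whenever `n ≤ m ≤ n'`. -/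
def BoundCondition (γ : ℕ → ℕ → ℕ → ℕ) : Prop :=
  (∀ n' n : ℕ, 0 < n' → n ≤ n' → (Function.support (γ n' n)).Finite) ∧
  (∀ n' : ℕ, 0 < n' → hle (histE 0) (γ n' 0)) ∧
  (∀ n n' : ℕ, 0 < n → 0 < n' → n ≤ n' →
    ∀ (W : Matrix (Fin n') (Fin n) ℝ) (b : Fin n' → ℝ),
      hle (actHist n' (Set.range (sig W b))) (γ n' n)) ∧
  (∀ n' n m : ℕ, 0 < n' → n ≤ m → m ≤ n' → hle (γ n' n) (γ n' m))

/-- The transition function `φ^{(γ)}_{n'} : V → V`,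
`v ↦ ∑_{m} v_m · cl_{min(m,n')}(γ_{min(m,n'), n'})`. -/
noncomputable def phi (γ : ℕ → ℕ → ℕ → ℕ) (n' : ℕ) (v : ℕ → ℕ) : ℕ → ℕ :=
  fun i => ∑' m : ℕ, v m * clip (min m n') (γ n' (min m n')) i

/-- The dimension histogram `H̃^{(i)}(U)`: entry `j` counts the length-`i` multi signatures
`(s_1, …, s_i) ∈ U` with `min(n_0, |s_1|, …, |s_i|) = j`. -/
noncomputable def dimHist (n : ℕ → ℕ) (i : ℕ)
    (U : Set (∀ l : Fin i, Fin (n (l.val + 1)) → Bool)) : ℕ → ℕ :=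
  fun j => {u ∈ U | minAct n i u = j}.ncard


/-- The iterated transition histograms: `phiIter γ n 0 = e_{n 0}` and
`phiIter γ n (l+1) = φ^{(γ)}_{n (l+1)} (phiIter γ n l)`, so that
`phiIter γ n L = φ^{(γ)}_{n_L} ∘ ⋯ ∘ φ^{(γ)}_{n_1} (e_{n_0})`. -/
noncomputable def phiIter (γ : ℕ → ℕ → ℕ → ℕ) (n : ℕ → ℕ) : ℕ → (ℕ → ℕ)
  | 0 => histE (n 0)
  | l + 1 => phi γ (n (l + 1)) (phiIter γ n l)

/-! For a multi signature `u` of the first `l` layers let `d(u) = min(n₀, |u₁|, …, |u_l|)`.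
On the inputs with multi signature `u`, each ReLU layer acts as the 0/1 diagonal projection onto
its active units, so the first `l` layers act as an affine map whose linear part has rank at most
`d(u)`. Layer `l + 1` restricted to these inputs is therefore a ReLU layer with input dimension
`min(d(u), n_{l+1})`, and the bound condition controls the signatures it attains, clipped at that
dimension. Since the tail sums of the clipped `γ` grow with the input dimension, summation by
parts carries `H̃^{(l)}(𝒮_l) ≼ φ_l ∘ ⋯ ∘ φ_1(e_{n₀})` (the histogram of `d` over the attained
multi signatures) from `l` to `l + 1`. At `l = L` the total mass of the left side is `|𝒮_L|`. -/

open Finset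

def SupportedBelow (v : ℕ → ℕ) (N : ℕ) : Prop := ∀ j, N ≤ j → v j = 0

section Histogram

variable {v w : ℕ → ℕ} {N : ℕ}

lemma SupportedBelow.mono (hv : SupportedBelow v N) {M : ℕ} (hNM : N ≤ M) :
    SupportedBelow v M :=
  fun j hj => hv j (hNM.trans hj)

lemma exists_supportedBelow (hv : (Function.support v).Finite) : ∃ N, SupportedBelow v N := by
  obtain ⟨N, hN⟩ := hv.bddAbove
  exact ⟨N + 1, fun j hj => Function.notMem_support.mp fun hj' => by have := hN hj'; omega⟩

lemma tailSum_eq_sum_Ico (hv : SupportedBelow v N) (J : ℕ) :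
    tailSum v J = ∑ j ∈ Ico J N, v j := by
  rw [tailSum, tsum_eq_sum (s := Ico J N)]
  · exact sum_congr rfl fun j hj => if_pos (mem_Ico.mp hj).1
  · intro j hj
    split_ifs with hJ
    · exact hv j (not_lt.mp fun hjN => hj (mem_Ico.mpr ⟨hJ, hjN⟩))
    · rfl

lemma tailSum_eq_zero (hv : SupportedBelow v N) {J : ℕ} (hJ : N ≤ J) : tailSum v J = 0 := by
  rw [tailSum_eq_sum_Ico hv, Ico_eq_empty_of_le hJ, sum_empty]

lemma tailSum_histE_zero (i : ℕ) : tailSum (histE i) 0 = 1 := by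
  simp [tailSum, histE]

lemma hle.trans {u : ℕ → ℕ} (huv : hle u v) (hvw : hle v w) : hle u w :=
  fun J => (huv J).trans (hvw J)

lemma supportedBelow_clip (k : ℕ) (v : ℕ → ℕ) : SupportedBelow (clip k v) (k + 1) :=
  fun j hj => by simp only [clip]; rw [if_neg (by omega), if_neg (by omega)]

lemma tailSum_clip (hv : SupportedBelow v N) (k J : ℕ) :
    tailSum (clip k v) J = if J ≤ k then tailSum v J else 0 := by
  split_ifs with hJk
  · have hv' : SupportedBelow v (max N (k + 1)) := hv.mono (le_max_left _ _)
    rw [tailSum_eq_sum_Ico (supportedBelow_clip k v), tailSum_eq_sum_Ico hv',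
      sum_Ico_succ_top hJk, ← sum_Ico_consecutive _ hJk (by omega : k ≤ max N (k + 1))]
    congr 1
    · exact sum_congr rfl fun j hj => if_pos (mem_Ico.mp hj).2
    · simp [clip, tailSum_eq_sum_Ico hv']
  · exact tailSum_eq_zero (supportedBelow_clip k v) (by omega)

/-- Summation by parts, with `a (0 - 1) = a 0` making the `j = 0` term vanish. -/
lemma sum_mul_eq_sum_tailSum_mul (hv : SupportedBelow v N) {a : ℕ → ℕ} (ha : Monotone a) :
    ∑ m ∈ range N, v m * a m
      = a 0 * tailSum v 0 + ∑ j ∈ range N, (a j - a (j - 1)) * tailSum v j := by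
  have telescope (m : ℕ) : a m = a 0 + ∑ j ∈ Ico 0 (m + 1), (a j - a (j - 1)) := by
    rw [← range_eq_Ico, sum_range_succ', Nat.zero_sub, Nat.sub_self, add_zero]
    simp only [Nat.add_sub_cancel]
    rw [sum_range_tsub ha, Nat.add_sub_cancel' (ha (Nat.zero_le m))]
  simp_rw [tailSum_eq_sum_Ico hv, range_eq_Ico]
  conv_lhs => enter [2, m]; rw [telescope m, mul_add, mul_sum]
  rw [sum_add_distrib, ← sum_Ico_Ico_comm, ← sum_mul, mul_comm]
  simp_rw [mul_sum, mul_comm]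

lemma sum_mul_le_sum_mul_of_hle (hv : SupportedBelow v N) (hw : SupportedBelow w N)
    (hvw : hle v w) {a : ℕ → ℕ} (ha : Monotone a) :
    ∑ m ∈ range N, v m * a m ≤ ∑ m ∈ range N, w m * a m := by
  rw [sum_mul_eq_sum_tailSum_mul hv ha, sum_mul_eq_sum_tailSum_mul hw ha]
  gcongr with j
  exacts [hvw 0, hvw j]

end Histogram

/-- `phiCol γ n' m = φ^{(γ)}_{n'}(e_m)`. -/
noncomputable def phiCol (γ : ℕ → ℕ → ℕ → ℕ) (n' m : ℕ) : ℕ → ℕ :=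
  clip (min m n') (γ n' (min m n'))

section Transition

variable {γ : ℕ → ℕ → ℕ → ℕ} {n' : ℕ} {v w : ℕ → ℕ} {N : ℕ}

lemma supportedBelow_phiCol (γ : ℕ → ℕ → ℕ → ℕ) (n' m : ℕ) :
    SupportedBelow (phiCol γ n' m) (n' + 1) :=
  (supportedBelow_clip _ _).mono (by omega)

lemma supportedBelow_phi (γ : ℕ → ℕ → ℕ → ℕ) (n' : ℕ) (v : ℕ → ℕ) :
    SupportedBelow (phi γ n' v) (n' + 1) := fun j hj => by
  simp only [phi]
  convert tsum_zero with m
  exact mul_eq_zero_of_right _ (supportedBelow_phiCol γ n' m j hj)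

lemma tailSum_phi (hv : SupportedBelow v N) (J : ℕ) :
    tailSum (phi γ n' v) J = ∑ m ∈ range N, v m * tailSum (phiCol γ n' m) J := by
  have phi_eq (i : ℕ) : phi γ n' v i = ∑ m ∈ range N, v m * phiCol γ n' m i :=
    tsum_eq_sum fun m hm => by rw [hv m (by simpa using hm), zero_mul]
  simp_rw [tailSum_eq_sum_Ico (supportedBelow_phi γ n' v), phi_eq,
    tailSum_eq_sum_Ico (supportedBelow_phiCol γ n' _), mul_sum]
  exact sum_comm

lemma monotone_tailSum_phiCol (hγ : BoundCondition γ) (hn' : 0 < n') (J : ℕ) :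
    Monotone fun m => tailSum (phiCol γ n' m) J := by
  intro m m' hmm'
  obtain ⟨N, hN⟩ := exists_supportedBelow (hγ.1 n' (min m n') hn' (min_le_right _ _))
  obtain ⟨N', hN'⟩ := exists_supportedBelow (hγ.1 n' (min m' n') hn' (min_le_right _ _))
  simp only [phiCol, tailSum_clip hN, tailSum_clip hN']
  split_ifs with h h'
  · exact hγ.2.2.2 n' (min m n') (min m' n') hn' (by omega) (min_le_right _ _) J
  · omega
  · exact Nat.zero_le _
  · exact le_rfl

lemma hle_phi (hγ : BoundCondition γ) (hn' : 0 < n') (hv : SupportedBelow v N)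
    (hw : SupportedBelow w N) (hvw : hle v w) : hle (phi γ n' v) (phi γ n' w) := fun J => by
  rw [tailSum_phi hv, tailSum_phi hw]
  exact sum_mul_le_sum_mul_of_hle hv hw hvw (monotone_tailSum_phiCol hγ hn' J)

lemma supportedBelow_phiIter (γ : ℕ → ℕ → ℕ → ℕ) (n : ℕ → ℕ) :
    ∀ l, SupportedBelow (phiIter γ n l) (n 0 + n l + 1)
  | 0 => fun j hj => if_neg (by omega)
  | l + 1 => (supportedBelow_phi γ _ _).mono (by omega)

end Transition

section Fibers

variable {α : Type*} [Fintype α] {P : α → Prop} [DecidablePred P] {g : α → ℕ} {N : ℕ}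

lemma supportedBelow_card_fiber (hg : ∀ x, P x → g x < N) :
    SupportedBelow (fun j => #{x | P x ∧ g x = j}) N := fun j hj => by
  rw [card_eq_zero, filter_eq_empty_iff]
  rintro x - ⟨hx, rfl⟩
  exact absurd (hg x hx) (by omega)

lemma tailSum_card_fiber (hg : ∀ x, P x → g x < N) (J : ℕ) :
    tailSum (fun j => #{x | P x ∧ g x = j}) J = #{x | P x ∧ J ≤ g x} := by
  rw [tailSum_eq_sum_Ico (supportedBelow_card_fiber hg),
    card_eq_sum_card_fiberwise (f := g) (t := Ico J N)]
  · simp_rw [filter_filter]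
    refine sum_congr rfl fun j hj => congrArg card (filter_congr fun x _ => ?_)
    exact ⟨fun h => ⟨⟨h.1, h.2 ▸ (mem_Ico.mp hj).1⟩, h.2⟩, fun h => ⟨h.1.1, h.2⟩⟩
  · intro x hx
    obtain ⟨hPx, hJx⟩ := (mem_filter.mp (mem_coe.mp hx)).2
    exact mem_Ico.mpr ⟨hJx, hg x hPx⟩

lemma sum_comp_eq_sum_card_fiber_mul (hg : ∀ x, P x → g x < N) (a : ℕ → ℕ) :
    ∑ x with P x, a (g x) = ∑ m ∈ range N, #{x | P x ∧ g x = m} * a m := by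
  rw [← sum_fiberwise_of_maps_to (t := range N)
    fun x hx => mem_range.mpr (hg x (mem_filter.mp hx).2)]
  refine sum_congr rfl fun m _ => ?_
  rw [filter_filter, sum_congr rfl fun x hx => by rw [(mem_filter.mp hx).2.2], sum_const,
    smul_eq_mul]

lemma ncard_sep_eq_card_filter (U : Set α) (p : α → Prop) [DecidablePred (· ∈ U)]
    [DecidablePred p] : {x ∈ U | p x}.ncard = #{x | x ∈ U ∧ p x} := by
  rw [← Set.ncard_coe_finset]
  congr
  ext x
  simp

end Fibers

section Signatures

open scoped Classical

abbrev MultiSig (n : ℕ → ℕ) (i : ℕ) : Type := ∀ l : Fin i, Fin (n (l.val + 1)) → Bool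

lemma cnt_le {k : ℕ} (s : Fin k → Bool) : cnt s ≤ k :=
  (card_filter_le _ _).trans_eq (card_fin k)

lemma minAct_le (n : ℕ → ℕ) (i : ℕ) (u : MultiSig n i) :
    minAct n i u ≤ n 0 :=
  (fold_min_le _).mpr (Or.inl le_rfl)

lemma minAct_snoc (n : ℕ → ℕ) (l : ℕ) (u : MultiSig n l)
    (s : Fin (n (l + 1)) → Bool) :
    minAct n (l + 1) (Fin.snoc u s) = min (cnt s) (minAct n l u) := by
  rw [minAct, Fin.univ_castSuccEmb, fold_cons, fold_map, Fin.snoc_last]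
  congr 1
  exact fold_congr fun _ _ => by
    simp only [Function.comp_apply, Fin.coe_castSuccEmb, Fin.snoc_castSucc]

lemma tailSum_actHist {n' : ℕ} (S : Set (Fin n' → Bool)) (J : ℕ) :
    tailSum (actHist n' S) J = #{s | s ∈ S ∧ J ≤ cnt s} := by
  have hS : actHist n' S = fun j => #{s | s ∈ S ∧ cnt s = j} :=
    funext fun _ => ncard_sep_eq_card_filter S _
  rw [hS, tailSum_card_fiber fun s _ => Nat.lt_succ_of_le (cnt_le s)]

lemma dimHist_eq_card_fiber (n : ℕ → ℕ) (i : ℕ)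
    (U : Set (MultiSig n i)) :
    dimHist n i U = fun j => #{u | u ∈ U ∧ minAct n i u = j} :=
  funext fun _ => ncard_sep_eq_card_filter U _

lemma tailSum_dimHist (n : ℕ → ℕ) (i : ℕ) (U : Set (MultiSig n i))
    (J : ℕ) : tailSum (dimHist n i U) J = #{u | u ∈ U ∧ J ≤ minAct n i u} := by
  rw [dimHist_eq_card_fiber,
    tailSum_card_fiber fun u _ => Nat.lt_succ_of_le (minAct_le n i u)]

lemma supportedBelow_dimHist (n : ℕ → ℕ) (i : ℕ)
    (U : Set (MultiSig n i)) : SupportedBelow (dimHist n i U) (n 0 + 1) := by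
  rw [dimHist_eq_card_fiber]
  exact supportedBelow_card_fiber fun u _ => Nat.lt_succ_of_le (minAct_le n i u)

lemma card_sig_filter_le_tailSum_clip {γ : ℕ → ℕ → ℕ → ℕ} (hγ : BoundCondition γ) {n' k : ℕ}
    (hn' : 0 < n') (hk : k ≤ n') (Wh : Matrix (Fin n') (Fin k) ℝ) (bh : Fin n' → ℝ) (J : ℕ) :
    #{s | s ∈ Set.range (sig Wh bh) ∧ J ≤ min (cnt s) k} ≤ tailSum (clip k (γ n' k)) J := by
  obtain ⟨N, hN⟩ := exists_supportedBelow (hγ.1 n' k hn' hk)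
  rw [tailSum_clip hN]
  split_ifs with hJk
  · by_cases hk0 : k = 0
    · obtain rfl : J = 0 := by omega
      have : Subsingleton (Fin k → ℝ) := by subst hk0; infer_instance
      calc _ ≤ 1 := card_le_one.mpr fun s hs t ht => by
            obtain ⟨y, rfl⟩ := (mem_filter.mp hs).2.1
            obtain ⟨z, rfl⟩ := (mem_filter.mp ht).2.1
            rw [Subsingleton.elim y z]
        _ = tailSum (histE 0) 0 := (tailSum_histE_zero 0).symm
        _ ≤ tailSum (γ n' k) 0 := hk0 ▸ hγ.2.1 n' hn' 0
    · calc _ ≤ #{s | s ∈ Set.range (sig Wh bh) ∧ J ≤ cnt s} :=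
            card_le_card (monotone_filter_right _ fun _ _ h => ⟨h.1, h.2.trans (min_le_left _ _)⟩)
        _ = tailSum (actHist n' (Set.range (sig Wh bh))) J := (tailSum_actHist _ J).symm
        _ ≤ _ := hγ.2.2.1 k n' (Nat.pos_of_ne_zero hk0) hn' hk Wh bh J
  · rw [Nat.le_zero, card_eq_zero, filter_eq_empty_iff]
    intro s _ hs
    omega

end Signatures

section Affine

open Module

lemma exists_matrix_le_range_mulVecLin {K : Type*} [Field K] {m k : ℕ}
    (U : Submodule K (Fin m → K)) (hU : finrank K U ≤ k) :
    ∃ A : Matrix (Fin m) (Fin k) K, U ≤ LinearMap.range A.mulVecLin := by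
  let bU := Module.finBasis K U
  let A : Matrix (Fin m) (Fin k) K :=
    of fun i j => if h : (j : ℕ) < finrank K U then (bU ⟨j, h⟩ : Fin m → K) i else 0
  refine ⟨A, ?_⟩
  calc U = (⊤ : Submodule K U).map U.subtype := (Submodule.map_subtype_top U).symm
    _ = Submodule.span K (U.subtype '' Set.range bU) := by rw [← bU.span_eq, Submodule.map_span]
    _ ≤ LinearMap.range A.mulVecLin := by
      rw [range_mulVecLin]
      refine Submodule.span_mono ?_
      rintro _ ⟨_, ⟨t, rfl⟩, rfl⟩
      refine ⟨Fin.castLE hU t, funext fun i => ?_⟩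
      simp [A, t.isLt]

lemma sig_eq_sig {n m n' : ℕ} {W : Matrix (Fin n') (Fin n) ℝ} {b : Fin n' → ℝ} {x : Fin n → ℝ}
    {W' : Matrix (Fin n') (Fin m) ℝ} {b' : Fin n' → ℝ} {x' : Fin m → ℝ}
    (h : W *ᵥ x + b = W' *ᵥ x' + b') : sig W b x = sig W' b' x' :=
  funext fun i => congrArg (fun t => decide (0 < t)) (congrFun h i)

lemma relu_eq_diagonal_mulVec {n n' : ℕ} (W : Matrix (Fin n') (Fin n) ℝ) (b : Fin n' → ℝ)
    (x : Fin n → ℝ) :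
    relu W b x = diagonal (fun i => if sig W b x i then 1 else 0) *ᵥ (W *ᵥ x + b) := by
  funext i
  rw [mulVec_diagonal]
  change max 0 (W i ⬝ᵥ x + b i)
    = (if decide (0 < W i ⬝ᵥ x + b i) then 1 else 0) * (W i ⬝ᵥ x + b i)
  by_cases h : 0 < W i ⬝ᵥ x + b i
  · simp [h, h.le]
  · simp [h, not_lt.mp h]

lemma exists_sig_comp_affine_mem_range {V : Type*} [AddCommGroup V] [Module ℝ V] {m n' k : ℕ}
    (W : Matrix (Fin n') (Fin m) ℝ) (b : Fin n' → ℝ) (f : V →ₗ[ℝ] (Fin m → ℝ))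
    (c : Fin m → ℝ) (hf : finrank ℝ (LinearMap.range f) ≤ k) :
    ∃ (Wh : Matrix (Fin n') (Fin (min k n')) ℝ) (bh : Fin n' → ℝ),
      ∀ x, sig W b (f x + c) ∈ Set.range (sig Wh bh) := by
  have hg : finrank ℝ (LinearMap.range (W.mulVecLin ∘ₗ f)) ≤ min k n' := by
    refine le_min ?_ ((Submodule.finrank_le _).trans_eq (finrank_fin_fun ℝ))
    rw [LinearMap.range_comp]
    exact (Submodule.finrank_map_le _ _).trans hf
  obtain ⟨Wh, hWh⟩ := exists_matrix_le_range_mulVecLin _ hg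
  refine ⟨Wh, W *ᵥ c + b, fun x => ?_⟩
  obtain ⟨y, hy⟩ := hWh (LinearMap.mem_range_self _ x)
  simp only [mulVecLin_apply, LinearMap.comp_apply] at hy
  exact ⟨y, sig_eq_sig (by rw [hy, mulVec_add, add_assoc])⟩

end Affine

section Network

open Module
open scoped Classical

variable {n : ℕ → ℕ} {W : ∀ l : ℕ, Matrix (Fin (n (l + 1))) (Fin (n l)) ℝ}
  {b : ∀ l : ℕ, Fin (n (l + 1)) → ℝ}

lemma msig_succ (l : ℕ) (x : Fin (n 0) → ℝ) :
    msig n W b (l + 1) x = Fin.snoc (msig n W b l x) (sig (W l) (b l) (fwd n W b l x)) := by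
  funext j
  refine Fin.lastCases ?_ (fun j => ?_) j
  · rw [Fin.snoc_last]; rfl
  · rw [Fin.snoc_castSucc]; rfl

lemma exists_linear_add_eq_fwd (l : ℕ) (x₀ : Fin (n 0) → ℝ) :
    ∃ (f : (Fin (n 0) → ℝ) →ₗ[ℝ] (Fin (n l) → ℝ)) (c : Fin (n l) → ℝ),
      finrank ℝ (LinearMap.range f) ≤ minAct n l (msig n W b l x₀) ∧
      ∀ x, msig n W b l x = msig n W b l x₀ → fwd n W b l x = f x + c := by
  induction l with
  | zero =>
    refine ⟨LinearMap.id, 0, ?_, fun x _ => (add_zero x).symm⟩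
    simpa [minAct] using LinearMap.finrank_range_le (LinearMap.id : (Fin (n 0) → ℝ) →ₗ[ℝ] _)
  | succ l ih =>
    obtain ⟨f, c, hf, hfwd⟩ := ih
    set s := sig (W l) (b l) (fwd n W b l x₀)
    set D : Matrix (Fin (n (l + 1))) (Fin (n (l + 1))) ℝ := diagonal fun i => if s i then 1 else 0
    refine ⟨(D * W l).mulVecLin ∘ₗ f, D *ᵥ (W l *ᵥ c + b l), ?_, fun x hx => ?_⟩
    · rw [msig_succ, minAct_snoc]
      refine le_min ?_ ?_
      · calc finrank ℝ (LinearMap.range ((D * W l).mulVecLin ∘ₗ f))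
            ≤ (D * W l).rank := Submodule.finrank_mono (LinearMap.range_comp_le_range _ _)
          _ ≤ D.rank := rank_mul_le_left _ _
          _ = cnt s := by
            rw [rank_diagonal, Fintype.card_subtype]
            exact congrArg card (filter_congr fun i _ => by simp)
      · rw [LinearMap.range_comp]
        exact (Submodule.finrank_map_le _ _).trans hf
    · rw [msig_succ, msig_succ] at hx
      obtain ⟨hprefix, hlast⟩ := Fin.snoc_injective2 hx
      change relu (W l) (b l) (fwd n W b l x) = _
      rw [relu_eq_diagonal_mulVec, hlast, hfwd x hprefix]
      simp [D, s, mulVec_add, mulVec_mulVec, add_assoc]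

variable {γ : ℕ → ℕ → ℕ → ℕ}

lemma card_snoc_mem_range_msig_le (hγ : BoundCondition γ) {l : ℕ} (hn' : 0 < n (l + 1))
    (x₀ : Fin (n 0) → ℝ) (J : ℕ) :
    #{s | Fin.snoc (msig n W b l x₀) s ∈ Set.range (msig n W b (l + 1)) ∧
        J ≤ min (cnt s) (minAct n l (msig n W b l x₀))}
      ≤ tailSum (phiCol γ (n (l + 1)) (minAct n l (msig n W b l x₀))) J := by
  obtain ⟨f, c, hf, hfwd⟩ := exists_linear_add_eq_fwd (W := W) (b := b) l x₀
  obtain ⟨Wh, bh, hsig⟩ := exists_sig_comp_affine_mem_range (W l) (b l) f c hf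
  refine (card_le_card fun s hs => ?_).trans
    (card_sig_filter_le_tailSum_clip hγ hn' (min_le_right _ _) Wh bh J)
  obtain ⟨⟨x, hx⟩, hJ⟩ := (mem_filter.mp hs).2
  rw [msig_succ] at hx
  obtain ⟨hprefix, rfl⟩ := Fin.snoc_injective2 hx
  have := cnt_le (sig (W l) (b l) (fwd n W b l x))
  exact mem_filter.mpr ⟨mem_univ _, hfwd x hprefix ▸ hsig x, by omega⟩

lemma card_msig_succ_le_sum (hγ : BoundCondition γ) {l : ℕ} (hn' : 0 < n (l + 1)) (J : ℕ) :
    #{u | u ∈ Set.range (msig n W b (l + 1)) ∧ J ≤ minAct n (l + 1) u}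
      ≤ ∑ u with u ∈ Set.range (msig n W b l), tailSum (phiCol γ (n (l + 1)) (minAct n l u)) J := by
  let fiber (u : MultiSig n l) : Finset (Fin (n (l + 1)) → Bool) :=
    {s | Fin.snoc u s ∈ Set.range (msig n W b (l + 1)) ∧ J ≤ min (cnt s) (minAct n l u)}
  calc _ ≤ #(({u | u ∈ Set.range (msig n W b l)} : Finset _).biUnion
        fun u => (fiber u).image fun s => (Fin.snoc u s : MultiSig n (l + 1))) := by
        refine card_le_card fun u hu => ?_
        obtain ⟨⟨x, rfl⟩, hJ⟩ := (mem_filter.mp hu).2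
        rw [msig_succ, minAct_snoc] at hJ
        refine mem_biUnion.mpr ⟨msig n W b l x, by simp, mem_image.mpr
          ⟨sig (W l) (b l) (fwd n W b l x), ?_, (msig_succ l x).symm⟩⟩
        exact mem_filter.mpr ⟨mem_univ _, ⟨x, msig_succ l x⟩, hJ⟩
    _ ≤ ∑ u with u ∈ Set.range (msig n W b l), #(fiber u) :=
        card_biUnion_le.trans (sum_le_sum fun _ _ => card_image_le)
    _ ≤ _ := sum_le_sum fun u hu => by
        obtain ⟨x₀, rfl⟩ := (mem_filter.mp hu).2
        exact card_snoc_mem_range_msig_le hγ hn' x₀ J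

lemma dimHist_msig_succ_hle (hγ : BoundCondition γ) {l : ℕ} (hn' : 0 < n (l + 1)) :
    hle (dimHist n (l + 1) (Set.range (msig n W b (l + 1))))
      (phi γ (n (l + 1)) (dimHist n l (Set.range (msig n W b l)))) := fun J => by
  rw [tailSum_dimHist, tailSum_phi (supportedBelow_dimHist n l _), dimHist_eq_card_fiber,
    ← sum_comp_eq_sum_card_fiber_mul fun u _ => Nat.lt_succ_of_le (minAct_le n l u)]
  exact card_msig_succ_le_sum hγ hn' J

lemma dimHist_msig_zero : dimHist n 0 (Set.range (msig n W b 0)) = histE (n 0) := by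
  have hmin (u) : minAct n 0 u = n 0 := by simp [minAct]
  funext j
  simp only [dimHist, histE, hmin]
  split_ifs with h
  · simp only [h, and_true, Set.ofPred_mem_eq, Set.ncard_eq_one]
    exact ⟨msig n W b 0 0, Set.eq_singleton_iff_unique_mem.mpr
      ⟨Set.mem_range_self 0, fun _ _ => Subsingleton.elim _ _⟩⟩
  · simp [Ne.symm h]

lemma dimHist_msig_hle_phiIter (hγ : BoundCondition γ) (hn : ∀ l, 0 < n l) :
    ∀ l, hle (dimHist n l (Set.range (msig n W b l))) (phiIter γ n l)
  | 0 => dimHist_msig_zero ▸ fun _ => le_rfl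
  | l + 1 => (dimHist_msig_succ_hle hγ (hn (l + 1))).trans <|
      hle_phi hγ (hn (l + 1)) ((supportedBelow_dimHist n l _).mono (by omega))
        (supportedBelow_phiIter γ n l)
        (dimHist_msig_hle_phiIter hγ hn l)

end Network

theorem stmt14_general (γ : ℕ → ℕ → ℕ → ℕ) (hγ : BoundCondition γ)
    (L : ℕ) (n : ℕ → ℕ) (hn : ∀ l, 0 < n l)
    (W : ∀ l : ℕ, Matrix (Fin (n (l + 1))) (Fin (n l)) ℝ)
    (b : ∀ l : ℕ, Fin (n (l + 1)) → ℝ) :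
    (Set.range (msig n W b L)).ncard ≤ tailSum (phiIter γ n L) 0 := by
  calc (Set.range (msig n W b L)).ncard
      = tailSum (dimHist n L (Set.range (msig n W b L))) 0 := by
        classical
        rw [tailSum_dimHist, ← ncard_sep_eq_card_filter]
        simp only [zero_le, and_true, Set.ofPred_mem_eq]
    _ ≤ tailSum (phiIter γ n L) 0 := dimHist_msig_hle_phiIter hγ hn L 0

/-- Let `γ ∈ Γ` satisfy the bound condition. In the multilayer setting with widths
`n 0, …, n L`, the number of attained multi signatures satisfies
`|𝒮_h| ≤ ‖φ^{(γ)}_{n_L} ∘ ⋯ ∘ φ^{(γ)}_{n_1}(e_{n_0})‖₁`, the `L1`-norm being the total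
sum `∑_j v_j = tailSum v 0`. -/
theorem stmt14 (γ : ℕ → ℕ → ℕ → ℕ) (hγ : BoundCondition γ)
    (L : ℕ) (hL : 0 < L) (n : ℕ → ℕ) (hn : ∀ l, 0 < n l)
    (W : ∀ l : ℕ, Matrix (Fin (n (l + 1))) (Fin (n l)) ℝ)
    (b : ∀ l : ℕ, Fin (n (l + 1)) → ℝ) :
    (Set.range (msig n W b L)).ncard ≤ tailSum (phiIter γ n L) 0 :=
  stmt14_general γ hγ L n hn W b
end
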